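/- arXiv:math/0202231 — 4 statements merged into one kernel-verified Lean document; each statement's English description precedes it below -/
import Mathlib

section
/- For every r ≥ 2 and every n ≥ r, any r-edge-coloring of the complete r-uniform hypergraph K_n^r contains a color class whose induced subhypergraph is spanning and connected. In particular f_k(K_n^r) = 1 for all k ≤ r. -/
/-- The "intersection graph on vertices" of the color class `i` of an edge
coloring `c` of the complete `r`-uniform hypergraph `K_n^r`:
two distinct vertices are adjacent iff some `r`-edge of color `i`
contains both.  Its connected components containing an edge coincide with
the components of the color class of the hypergraph. -/
def hColorClass (r : ℕ) {n k : ℕ} (c : Finset (Fin n) → Fin k) (i : Fin k) :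
    SimpleGraph (Fin n) where
  Adj u v := u ≠ v ∧ ∃ e : Finset (Fin n), e.card = r ∧ c e = i ∧ u ∈ e ∧ v ∈ e
  symm := by
    constructor
    rintro u v ⟨h1, e, h2, h3, h4, h5⟩
    exact ⟨h1.symm, e, h2, h3, h5, h4⟩
  loopless := by
    constructor
    intro u h
    exact h.1 rfl

/-- The number of connected components containing at least one edge. -/
noncomputable def numEdgeComps {n : ℕ} (G : SimpleGraph (Fin n)) : ℕ :=
  Nat.card {C : G.ConnectedComponent //
    ∃ u v : Fin n, G.Adj u v ∧ G.connectedComponentMk u = C}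

/-- Color `i` is used on some `r`-edge. -/
def hUsed (r : ℕ) {n k : ℕ} (c : Finset (Fin n) → Fin k) (i : Fin k) : Prop :=
  ∃ e : Finset (Fin n), e.card = r ∧ c e = i

/-- The minimum, over used colors, of the number of components of the
corresponding color class. -/
noncomputable def hMinComps (r : ℕ) {n k : ℕ} (c : Finset (Fin n) → Fin k) : ℕ :=
  sInf ((fun i => numEdgeComps (hColorClass r c i)) '' {i | hUsed r c i})

/-- `f_k(K_n^r)`: the maximum over `k`-edge-colorings of `K_n^r` of the minimum,
over used colors, of the number of components of the color class. -/
noncomputable def fHyper (n r k : ℕ) : ℕ :=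
  sSup (Set.range fun c : Finset (Fin n) → Fin k => hMinComps r c)


/-!
If no color class is connected, every color `i` has a cut `(A i, (A i)ᶜ)` of the vertex set
that no edge of color `i` crosses (take `A i` to be a component of the class). Two cuts can be
crossed simultaneously by two vertices, and a nonempty set can be made to cross one more cut by
adding one vertex, so some set of at most `r` vertices crosses all `r` cuts. Any `r`-edge
containing it crosses in particular the cut of its own color, which is absurd.
-/

open Finset

def Crosses {V : Type*} (S : Finset V) (A : Set V) : Prop :=
  (∃ x ∈ S, x ∈ A) ∧ ∃ y ∈ S, y ∉ A

section Crosses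

variable {V : Type*} {S T : Finset V} {A B : Set V}

lemma Crosses.mono (h : Crosses S A) (hST : S ⊆ T) : Crosses T A :=
  ⟨h.1.imp fun _ ⟨hx, hxA⟩ => ⟨hST hx, hxA⟩, h.2.imp fun _ ⟨hy, hyA⟩ => ⟨hST hy, hyA⟩⟩

lemma crosses_pair_iff [DecidableEq V] {x y : V} : Crosses {x, y} A ↔ (x ∈ A ↔ y ∉ A) := by
  simp only [Crosses, mem_insert, mem_singleton, exists_eq_or_imp, exists_eq_left]
  tauto

lemma exists_pair_crosses_crosses [DecidableEq V] (hA : A.Nonempty) (hAc : Aᶜ.Nonempty)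
    (hB : B.Nonempty) (hBc : Bᶜ.Nonempty) :
    ∃ x y : V, Crosses {x, y} A ∧ Crosses {x, y} B := by
  simp only [crosses_pair_iff]
  obtain ⟨a, ha⟩ := hA
  obtain ⟨b, hb⟩ := hAc
  obtain ⟨p, hp⟩ := hB
  obtain ⟨q, hq⟩ := hBc
  simp only [Set.mem_compl_iff] at hb hq
  by_cases hpA : p ∈ A <;> by_cases hqA : q ∈ A
  · by_cases hbB : b ∈ B
    exacts [⟨b, q, by tauto⟩, ⟨p, b, by tauto⟩]
  · exact ⟨p, q, by tauto⟩
  · exact ⟨q, p, by tauto⟩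
  · by_cases haB : a ∈ B
    exacts [⟨a, q, by tauto⟩, ⟨p, a, by tauto⟩]

lemma Finset.Nonempty.exists_crosses_insert [DecidableEq V] (hS : S.Nonempty)
    (hA : A.Nonempty) (hAc : Aᶜ.Nonempty) : ∃ x, Crosses (insert x S) A := by
  obtain ⟨s, hs⟩ := hS
  by_cases hsA : s ∈ A
  · obtain ⟨b, hb⟩ := hAc
    exact ⟨b, ⟨s, mem_insert_of_mem hs, hsA⟩, b, mem_insert_self b S, hb⟩
  · obtain ⟨a, ha⟩ := hA
    exact ⟨a, ⟨a, mem_insert_self a S, ha⟩, s, mem_insert_of_mem hs, hsA⟩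

lemma exists_superset_crosses_forall [DecidableEq V] {ι : Type*} (A : ι → Set V)
    (hA : ∀ i, (A i).Nonempty) (hAc : ∀ i, (A i)ᶜ.Nonempty) (hS : S.Nonempty) (I : Finset ι) :
    ∃ T, S ⊆ T ∧ #T ≤ #S + #I ∧ ∀ i ∈ I, Crosses T (A i) := by
  classical
  induction I using Finset.induction_on with
  | empty => exact ⟨S, subset_rfl, by simp, by simp⟩
  | insert j I hj ih =>
    obtain ⟨T, hST, hT, hcross⟩ := ih
    obtain ⟨x, hx⟩ := (hS.mono hST).exists_crosses_insert (hA j) (hAc j)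
    refine ⟨insert x T, hST.trans (subset_insert x T), ?_, ?_⟩
    · rw [card_insert_of_notMem hj]
      linarith [card_insert_le x T]
    · simp only [mem_insert, forall_eq_or_imp]
      exact ⟨hx, fun i hi => (hcross i hi).mono (subset_insert x T)⟩

/-- The two-vertex start is what brings the bound down from `card ι + 1` to `card ι`. -/
lemma exists_card_le_crosses_forall [DecidableEq V] {ι : Type*} [Fintype ι] [DecidableEq ι]
    (A : ι → Set V) (hι : 2 ≤ Fintype.card ι)
    (hA : ∀ i, (A i).Nonempty) (hAc : ∀ i, (A i)ᶜ.Nonempty) :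
    ∃ S : Finset V, #S ≤ Fintype.card ι ∧ ∀ i, Crosses S (A i) := by
  obtain ⟨i₀, i₁, hi⟩ := Fintype.exists_pair_of_one_lt_card hι
  obtain ⟨x, y, hx₀, hx₁⟩ := exists_pair_crosses_crosses (hA i₀) (hAc i₀) (hA i₁) (hAc i₁)
  obtain ⟨T, hT, hcard, hcross⟩ := exists_superset_crosses_forall A hA hAc
    (insert_nonempty x {y}) (univ \ {i₀, i₁})
  refine ⟨T, ?_, fun i => ?_⟩
  · have := card_le_two (a := x) (b := y)
    rw [card_sdiff_of_subset (subset_univ _), card_pair hi, card_univ] at hcard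
    omega
  · by_cases h : i ∈ ({i₀, i₁} : Finset ι)
    · rcases mem_insert.1 h with rfl | h
      · exact hx₀.mono hT
      · exact (mem_singleton.1 h) ▸ hx₁.mono hT
    · exact hcross i (mem_sdiff.2 ⟨mem_univ i, h⟩)

end Crosses

lemma SimpleGraph.IsClique.not_crosses_reachable {V : Type*} {G : SimpleGraph V} {s : Finset V}
    (hs : G.IsClique (s : Set V)) (u : V) : ¬ Crosses s {w | G.Reachable u w} := by
  rintro ⟨⟨x, hx, hux⟩, y, hy, huy⟩
  by_cases hxy : x = y
  · exact huy (hxy ▸ hux)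
  · exact huy (hux.trans (hs hx hy hxy).reachable)

section Coloring

variable {r n k : ℕ}

lemma isClique_hColorClass (c : Finset (Fin n) → Fin k) {e : Finset (Fin n)} (he : #e = r) :
    (hColorClass r c (c e)).IsClique (e : Set (Fin n)) :=
  fun _ hx _ hy hxy => ⟨hxy, e, he, rfl, hx, hy⟩

lemma hColorClass_comp {m : ℕ} {f : Fin k → Fin m} (hf : Function.Injective f)
    (c : Finset (Fin n) → Fin k) (i : Fin k) :
    hColorClass r (f ∘ c) (f i) = hColorClass r c i := by
  ext u v
  simp [hColorClass, hf.eq_iff]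

lemma hUsed.exists_adj {c : Finset (Fin n) → Fin k} {i : Fin k} (hr : 2 ≤ r)
    (hi : hUsed r c i) : ∃ u v, (hColorClass r c i).Adj u v := by
  obtain ⟨e, he, hce⟩ := hi
  obtain ⟨u, hu, v, hv, huv⟩ := one_lt_card.1 (he ▸ hr)
  exact ⟨u, v, huv, e, he, hce, hu, hv⟩

theorem exists_connected_hColorClass (hr : 2 ≤ r) (hn : r ≤ n) (c : Finset (Fin n) → Fin r) :
    ∃ i, (hColorClass r c i).Connected := by
  have : Nonempty (Fin n) := ⟨⟨0, by omega⟩⟩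
  by_contra! h
  have hcut : ∀ i, ∃ u v, ¬ (hColorClass r c i).Reachable u v := fun i => by
    simpa [SimpleGraph.connected_iff, SimpleGraph.Preconnected] using h i
  choose u v huv using hcut
  obtain ⟨S, hS, hcross⟩ := exists_card_le_crosses_forall
    (fun i => {w | (hColorClass r c i).Reachable (u i) w}) (by simpa using hr)
    (fun i => ⟨u i, .rfl⟩) (fun i => ⟨v i, huv i⟩)
  obtain ⟨e, hSe, -, he⟩ :=
    exists_subsuperset_card_eq (subset_univ S) (by simpa using hS) (by simpa using hn)
  exact (isClique_hColorClass c he).not_crosses_reachable (u (c e)) ((hcross (c e)).mono hSe)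

theorem exists_used_connected_hColorClass (hr : 2 ≤ r) (hn : r ≤ n) (hk : k ≤ r)
    (c : Finset (Fin n) → Fin k) : ∃ i, hUsed r c i ∧ (hColorClass r c i).Connected := by
  have : Nontrivial (Fin n) := Fin.nontrivial_iff_two_le.2 (hr.trans hn)
  obtain ⟨j, hj⟩ := exists_connected_hColorClass hr hn (Fin.castLE hk ∘ c)
  obtain ⟨v, -, e, he, rfl, -, -⟩ := hj.preconnected.exists_adj_of_nontrivial ⟨0, by omega⟩
  refine ⟨c e, ⟨e, he, rfl⟩, ?_⟩
  rwa [← hColorClass_comp (Fin.castLE_injective hk)]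

end Coloring

lemma numEdgeComps_eq_one {n : ℕ} {G : SimpleGraph (Fin n)} (hG : G.Connected)
    (hadj : ∃ u v, G.Adj u v) : numEdgeComps G = 1 := by
  obtain ⟨u, v, huv⟩ := hadj
  have := hG.preconnected.subsingleton_connectedComponent
  rw [numEdgeComps, Nat.card_eq_one_iff_unique]
  exact ⟨inferInstance, ⟨⟨_, u, v, huv, rfl⟩⟩⟩

lemma one_le_numEdgeComps {n : ℕ} {G : SimpleGraph (Fin n)} (hadj : ∃ u v, G.Adj u v) :
    1 ≤ numEdgeComps G := by
  obtain ⟨u, v, huv⟩ := hadj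
  have : Nonempty {C : G.ConnectedComponent // ∃ u v, G.Adj u v ∧ G.connectedComponentMk u = C} :=
    ⟨⟨_, u, v, huv, rfl⟩⟩
  exact Nat.card_pos

lemma hMinComps_eq_one {r n k : ℕ} {c : Finset (Fin n) → Fin k} (hr : 2 ≤ r)
    (h : ∃ i, hUsed r c i ∧ (hColorClass r c i).Connected) : hMinComps r c = 1 := by
  obtain ⟨i, hi, hconn⟩ := h
  have hmem : 1 ∈ (fun i => numEdgeComps (hColorClass r c i)) '' {i | hUsed r c i} :=
    ⟨i, hi, numEdgeComps_eq_one hconn (hi.exists_adj hr)⟩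
  refine le_antisymm (Nat.sInf_le hmem) (le_csInf ⟨1, hmem⟩ ?_)
  rintro _ ⟨j, hj, rfl⟩
  exact one_le_numEdgeComps (hj.exists_adj hr)

/-- For `r ≥ 2` and `n ≥ r`, any `r`-edge-coloring of `K_n^r` has a color
class whose induced subhypergraph is spanning and connected; in particular
`f_k(K_n^r) = 1` for all `1 ≤ k ≤ r`. -/
theorem hyper_r_coloring_connected (r n : ℕ) (hr : 2 ≤ r) (hn : r ≤ n) :
    (∀ c : Finset (Fin n) → Fin r, ∃ i : Fin r, (hColorClass r c i).Connected) ∧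
    (∀ k : ℕ, 1 ≤ k → k ≤ r → fHyper n r k = 1) := by
  refine ⟨exists_connected_hColorClass hr hn, fun k hk hkr => ?_⟩
  have : Nonempty (Fin k) := ⟨⟨0, hk⟩⟩
  have hmin (c : Finset (Fin n) → Fin k) : hMinComps r c = 1 :=
    hMinComps_eq_one hr (exists_used_connected_hColorClass hr hn hkr c)
  simp only [fHyper, hmin, Set.range_const, csSup_singleton]
end

section
/- f_3(K_5) = 2. -/
/-- The simple graph on `Fin n` induced by the color class `i` of the edge
coloring `c` of the complete graph `K_n`. -/
def colorClass {n k : ℕ} (c : Sym2 (Fin n) → Fin k) (i : Fin k) :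
    SimpleGraph (Fin n) where
  Adj u v := u ≠ v ∧ c s(u, v) = i
  symm := by
    constructor
    intro u v h
    exact ⟨h.1.symm, by rw [Sym2.eq_swap]; exact h.2⟩
  loopless := by
    constructor
    intro u h
    exact h.1 rfl

/-- Color `i` is used on some edge of `K_n`. -/
def usedColor {n k : ℕ} (c : Sym2 (Fin n) → Fin k) (i : Fin k) : Prop :=
  ∃ u v : Fin n, u ≠ v ∧ c s(u, v) = i

/-- The minimum, over used colors, of the number of components of the
corresponding color class. -/
noncomputable def minComps {n k : ℕ} (c : Sym2 (Fin n) → Fin k) : ℕ :=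
  sInf ((fun i => numEdgeComps (colorClass c i)) '' {i | usedColor c i})

/-- `f_k(K_n)`: the maximum over `k`-edge-colorings of `K_n` of the minimum,
over used colors, of the number of components of the color class. -/
noncomputable def fGraph (n k : ℕ) : ℕ :=
  sSup (Set.range fun c : Sym2 (Fin n) → Fin k => minComps c)

/-!
Every component containing an edge has at least two vertices, so a graph on `n` vertices
has at most `n / 2` such components; hence `f_k(K_n) ≤ n / 2`, which is `2` for `n = 5`.
Conversely, in the coloring of `K_5` whose classes are `{01, 23, 24, 34}`, `{02, 03, 14}` and
`{04, 12, 13}`, each class splits into two components with edges.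
-/

namespace SimpleGraph

variable {n : ℕ} (G : SimpleGraph (Fin n))

theorem two_mul_numEdgeComps_le : 2 * numEdgeComps G ≤ n := by
  set E := {C : G.ConnectedComponent // ∃ u v, G.Adj u v ∧ G.connectedComponentMk u = C}
  have hedge : ∀ C : E, ∃ p : Fin n × Fin n, G.Adj p.1 p.2 ∧
      G.connectedComponentMk p.1 = C.1 ∧ G.connectedComponentMk p.2 = C.1 := by
    rintro ⟨C, u, v, huv, rfl⟩
    exact ⟨(u, v), huv, rfl, ConnectedComponent.eq.2 huv.symm.reachable⟩
  choose p hadj hfst hsnd using hedge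
  have hinj : Function.Injective (Sum.elim (fun C => (p C).1) (fun C => (p C).2)) := by
    refine Function.Injective.sumElim (fun C D h => ?_) (fun C D h => ?_) (fun C D h => ?_)
    · exact Subtype.ext (by rw [← hfst C, h, hfst D])
    · exact Subtype.ext (by rw [← hsnd C, h, hsnd D])
    · obtain rfl : C = D := Subtype.ext (by rw [← hfst C, h, hsnd D])
      exact (hadj C).ne h
  have := Nat.card_le_card_of_injective _ hinj
  rw [Nat.card_sum, Nat.card_fin] at this
  change 2 * Nat.card E ≤ n
  omega

variable {G}

theorem two_le_numEdgeComps (S : Finset (Fin n)) (hS : ∀ x y, G.Adj x y → x ∈ S → y ∈ S)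
    {u₁ v₁ u₂ v₂ : Fin n} (h₁ : G.Adj u₁ v₁) (h₂ : G.Adj u₂ v₂) (hu₁ : u₁ ∈ S)
    (hu₂ : u₂ ∉ S) : 2 ≤ numEdgeComps G := by
  have hne : G.connectedComponentMk u₁ ≠ G.connectedComponentMk u₂ := fun h => by
    obtain ⟨w⟩ := ConnectedComponent.eq.1 h
    obtain ⟨d, -, hd, hd'⟩ := w.exists_boundary_dart S hu₁ hu₂
    exact hd' (hS _ _ d.adj hd)
  have : Nontrivial {C : G.ConnectedComponent //
      ∃ u v, G.Adj u v ∧ G.connectedComponentMk u = C} :=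
    ⟨⟨_, u₁, v₁, h₁, rfl⟩, ⟨_, u₂, v₂, h₂, rfl⟩, fun h => hne (congrArg Subtype.val h)⟩
  exact Finite.one_lt_card_iff_nontrivial.2 this

end SimpleGraph

section Colorings

variable {n k : ℕ}

instance colorClass.decidableRelAdj (c : Sym2 (Fin n) → Fin k) (i : Fin k) :
    DecidableRel (colorClass c i).Adj :=
  fun u v => inferInstanceAs (Decidable (u ≠ v ∧ c s(u, v) = i))

theorem minComps_le_half (c : Sym2 (Fin n) → Fin k) : minComps c ≤ n / 2 := by
  rcases ((fun i => numEdgeComps (colorClass c i)) '' {i | usedColor c i}).eq_empty_or_nonempty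
    with h | h
  · simp [minComps, h]
  · obtain ⟨i, -, hi⟩ := Nat.sInf_mem h
    have := (colorClass c i).two_mul_numEdgeComps_le
    have hmin : minComps c = numEdgeComps (colorClass c i) := hi.symm
    omega

theorem le_minComps {c : Sym2 (Fin n) → Fin k} {m : ℕ} (hc : ∃ i, usedColor c i)
    (h : ∀ i, m ≤ numEdgeComps (colorClass c i)) : m ≤ minComps c :=
  le_csInf (hc.elim fun i hi => ⟨_, i, hi, rfl⟩) (by rintro _ ⟨i, -, rfl⟩; exact h i)

theorem fGraph_le_half (n k : ℕ) : fGraph n k ≤ n / 2 :=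
  csSup_le' (by rintro _ ⟨c, rfl⟩; exact minComps_le_half c)

theorem minComps_le_fGraph (c : Sym2 (Fin n) → Fin k) : minComps c ≤ fGraph n k :=
  le_csSup ⟨n / 2, by rintro _ ⟨c, rfl⟩; exact minComps_le_half c⟩ ⟨c, rfl⟩

end Colorings

open SimpleGraph

def extremalColoring (e : Sym2 (Fin 5)) : Fin 3 :=
  if e ∈ ({s(0, 1), s(2, 3), s(2, 4), s(3, 4)} : Finset (Sym2 (Fin 5))) then 0
  else if e ∈ ({s(0, 2), s(0, 3), s(1, 4)} : Finset (Sym2 (Fin 5))) then 1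
  else 2

theorem two_le_minComps_extremalColoring : 2 ≤ minComps extremalColoring := by
  refine le_minComps ⟨0, 0, 1, by decide, by decide⟩ fun i => ?_
  fin_cases i
  · refine two_le_numEdgeComps (u₁ := 0) (v₁ := 1) (u₂ := 2) (v₂ := 3) {0, 1}
      ?_ ?_ ?_ ?_ ?_ <;> decide
  · refine two_le_numEdgeComps (u₁ := 0) (v₁ := 2) (u₂ := 1) (v₂ := 4) {0, 2, 3}
      ?_ ?_ ?_ ?_ ?_ <;> decide
  · refine two_le_numEdgeComps (u₁ := 0) (v₁ := 4) (u₂ := 1) (v₂ := 2) {0, 4}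
      ?_ ?_ ?_ ?_ ?_ <;> decide

/-- `f_3(K_5) = 2`. -/
theorem f_three_K5 : fGraph 5 3 = 2 :=
  le_antisymm (fGraph_le_half 5 3)
    (two_le_minComps_extremalColoring.trans (minComps_le_fGraph _))
end

section
/- For every n ≥ 6, f_3(K_n) = ⌊n/6⌋ + 1; i.e., there is a 3-edge-coloring of K_n in which every color class has at least ⌊n/6⌋+1 components, and in every 3-edge-coloring of K_n some color class has at most ⌊n/6⌋+1 components. -/
/-!
Upper bound: suppose every used colour class has at least `n/6 + 2` components. If some pair
`s, t` is joined in exactly one colour `i`, every vertex outside the `i`-component of `s` is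
joined to one of `s, t` in colour `j` and to the other in colour `k`. If both orientations
occur, colour `i` has at most two components. Otherwise the complements of the `i`-component
of `s`, the `j`-component of `t` and the `k`-component of `s` (say) are pairwise disjoint, and
each has at least `2 (n/6 + 1)` vertices because every other component contains an edge: more
than `n` vertices in total. If no pair is joined in exactly one colour, some colour class is
connected.

Lower bound: split the vertices into the residue classes mod 3, give class `i` a matching of
`n/6` edges of colour `i`, and colour all other edges so that no further edge of colour `i` meets
class `i`. Each matching edge is then a component of colour `i`, and colour `i` has one more
component, containing the edges between the other two classes.
-/

open Function SimpleGraph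

theorem Set.two_mul_ncard_image_le {α β : Type*} [Finite α] {f : α → β} {A : Set α}
    (h : ∀ a ∈ A, ∃ b ∈ A, b ≠ a ∧ f b = f a) : 2 * (f '' A).ncard ≤ A.ncard := by
  classical
  obtain ⟨A, rfl⟩ := A.toFinite.exists_finset_coe
  rw [← Finset.coe_image, Set.ncard_coe_finset, Set.ncard_coe_finset]
  refine Finset.mul_card_image_le_card A 2 fun y hy => ?_
  obtain ⟨a, ha, rfl⟩ := Finset.mem_image.1 hy
  obtain ⟨b, hb, hba, hfb⟩ := h a ha
  calc 2 = ({a, b} : Finset α).card := (Finset.card_pair hba.symm).symm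
    _ ≤ _ := Finset.card_le_card (by simp_all [Finset.insert_subset_iff])

theorem Set.ncard_add_ncard_add_ncard_le {α : Type*} [Finite α] {A B C : Set α}
    (hAB : Disjoint A B) (hAC : Disjoint A C) (hBC : Disjoint B C) :
    A.ncard + B.ncard + C.ncard ≤ Nat.card α := by
  rw [← Set.ncard_union_eq hAB, ← Set.ncard_union_eq (Set.disjoint_union_left.2 ⟨hAC, hBC⟩)]
  exact Set.ncard_le_card _

section NumEdgeComps

variable {n : ℕ} {G : SimpleGraph (Fin n)}

theorem numEdgeComps_eq_ncard (G : SimpleGraph (Fin n)) :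
    numEdgeComps G = (G.connectedComponentMk '' G.support).ncard := by
  rw [numEdgeComps, ← Nat.card_coe_set_eq]
  congr 2
  ext C
  simp [SimpleGraph.mem_support]

theorem numEdgeComps_pos_iff : 0 < numEdgeComps G ↔ ∃ u v, G.Adj u v := by
  rw [numEdgeComps_eq_ncard, Set.ncard_pos, Set.image_nonempty]
  simp [Set.Nonempty, SimpleGraph.mem_support]

theorem numEdgeComps_pos_of_reachable {u v : Fin n} (huv : u ≠ v) (h : G.Reachable u v) :
    0 < numEdgeComps G := by
  obtain ⟨p⟩ := h
  cases p with
  | nil => exact absurd rfl huv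
  | cons ha _ => exact numEdgeComps_pos_iff.2 ⟨_, _, ha⟩

theorem numEdgeComps_le_ncard_of_forall_reachable (S : Set (Fin n))
    (h : ∀ v, ∃ s ∈ S, G.Reachable v s) : numEdgeComps G ≤ S.ncard := by
  rw [numEdgeComps_eq_ncard]
  refine (Set.ncard_le_ncard ?_).trans (Set.ncard_image_le (f := G.connectedComponentMk))
  rintro _ ⟨v, -, rfl⟩
  obtain ⟨s, hs, hvs⟩ := h v
  exact ⟨s, hs, (ConnectedComponent.eq.2 hvs).symm⟩

theorem exists_not_reachable_of_one_lt_numEdgeComps (h : 1 < numEdgeComps G) (s : Fin n) :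
    ∃ w, ¬ G.Reachable w s := by
  by_contra! hs
  have := numEdgeComps_le_ncard_of_forall_reachable {s} fun v => ⟨s, rfl, hs v⟩
  simp at this
  omega

theorem two_mul_numEdgeComps_le (G : SimpleGraph (Fin n)) (s : Fin n) :
    2 * numEdgeComps G ≤ {v | ¬ G.Reachable v s}.ncard + 2 := by
  set A := G.support ∩ {v | ¬ G.Reachable v s}
  have hcover : G.connectedComponentMk '' G.support ⊆
      insert (G.connectedComponentMk s) (G.connectedComponentMk '' A) := by
    rintro _ ⟨v, hv, rfl⟩
    by_cases hvs : G.Reachable v s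
    · exact Or.inl (ConnectedComponent.eq.2 hvs)
    · exact Or.inr ⟨v, ⟨hv, hvs⟩, rfl⟩
  -- every vertex of `A` shares its component with a neighbour, which also lies in `A`
  have hfib : 2 * (G.connectedComponentMk '' A).ncard ≤ A.ncard := by
    refine Set.two_mul_ncard_image_le fun v ⟨hv, hvs⟩ => ?_
    obtain ⟨w, hvw⟩ := hv
    refine ⟨w, ⟨⟨v, hvw.symm⟩, fun hws => hvs (hvw.reachable.trans hws)⟩, hvw.ne.symm,
      (ConnectedComponent.eq.2 hvw.reachable).symm⟩
  have h1 := (Set.ncard_le_ncard hcover).trans (Set.ncard_insert_le _ _)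
  have h2 : A.ncard ≤ {v | ¬ G.Reachable v s}.ncard := Set.ncard_le_ncard Set.inter_subset_right
  rw [numEdgeComps_eq_ncard]
  omega

theorem card_le_numEdgeComps {ι α : Type*} [Finite ι] (f : Fin n → α)
    (hf : ∀ u v, G.Adj u v → f u = f v) (a : ι → Fin n) (ha : ∀ j, a j ∈ G.support)
    (hinj : Injective (f ∘ a)) : Nat.card ι ≤ numEdgeComps G := by
  have hreach : ∀ u v, G.Reachable u v → f u = f v := by
    rintro u v ⟨p⟩
    induction p with
    | nil => rfl
    | cons h _ ih => exact (hf _ _ h).trans ih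
  let F := ConnectedComponent.lift f fun u v _ _ => hreach u v ⟨‹_›⟩
  rw [numEdgeComps_eq_ncard, ← Set.ncard_range_of_injective hinj]
  refine (Set.ncard_le_ncard ?_).trans (Set.ncard_image_le (f := F))
  rintro _ ⟨j, rfl⟩
  exact ⟨_, ⟨a j, ha j, rfl⟩, rfl⟩

end NumEdgeComps

section Construction

variable {n : ℕ}

def residue (v : Fin n) : Fin 3 := ⟨v.val % 3, Nat.mod_lt _ three_pos⟩

/-- Inside residue class `i` the pairs `{6q + i, 6q + i + 3}` form the matching of colour `i`;
the other edges of class `i` get colour `i + 1`, and an edge between two classes gets the third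
colour. -/
def pairColor (u v : Fin n) : Fin 3 :=
  if residue u = residue v then
    if u.val / 6 = v.val / 6 then residue u else residue u + 1
  else -(residue u + residue v)

theorem pairColor_comm (u v : Fin n) : pairColor u v = pairColor v u := by
  unfold pairColor
  by_cases h : residue u = residue v
  · simp [h, eq_comm]
  · simp [h, Ne.symm h, add_comm]

def residueColoring (n : ℕ) : Sym2 (Fin n) → Fin 3 :=
  Sym2.lift ⟨pairColor, pairColor_comm⟩

def matchingKey (i : Fin 3) (v : Fin n) : Option ℕ :=
  if residue v = i then some (v.val / 6) else none

theorem matchingKey_eq_of_pairColor_eq {i : Fin 3} {u v : Fin n} (h : pairColor u v = i) :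
    matchingKey i u = matchingKey i v := by
  have hnext : ∀ a : Fin 3, a + 1 ≠ a := by decide
  have hthird : ∀ a b : Fin 3, a ≠ b → -(a + b) ≠ a ∧ -(a + b) ≠ b := by decide
  unfold pairColor at h
  unfold matchingKey
  split_ifs at h with hres hkey
  · rw [hres, hkey]
  · subst h
    rw [← hres]
    simp [(hnext _).symm]
  · subst h
    rw [if_neg (hthird _ _ hres).1.symm, if_neg (hthird _ _ hres).2.symm]

theorem le_numEdgeComps_residueColoring (hn : 3 ≤ n) (i : Fin 3) :
    n / 6 + 1 ≤ numEdgeComps (colorClass (residueColoring n) i) := by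
  have hres : ∀ (v : Fin n) (a : Fin 3), v.val % 3 = a.val → residue v = a :=
    fun _ _ h => Fin.ext h
  obtain ⟨hnext, hne, hthird⟩ : i + 1 ≠ i ∧ i + 1 ≠ i + 2 ∧ -((i + 1) + (i + 2)) = i := by
    revert i; decide
  -- one vertex on each matching edge of colour `i`, and one on the edge `{i + 1, i + 2}`
  let a : Option (Fin (n / 6)) → Fin n
    | some q => ⟨6 * q + i, by omega⟩
    | none => ⟨(i + 1 : Fin 3), by have := (i + 1).isLt; omega⟩
  have ha : ∀ j, a j ∈ (colorClass (residueColoring n) i).support := by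
    rintro (_ | q)
    · refine ⟨⟨(i + 2 : Fin 3), by have := (i + 2).isLt; omega⟩,
        fun h => hne (Fin.ext (Fin.mk.inj h)), ?_⟩
      show pairColor _ _ = i
      rw [pairColor, hres _ (i + 1) (Nat.mod_eq_of_lt (i + 1).isLt),
        hres _ (i + 2) (Nat.mod_eq_of_lt (i + 2).isLt), if_neg hne, hthird]
    · refine ⟨⟨6 * q + i + 3, by omega⟩, by simp [a, Fin.ext_iff], ?_⟩
      show pairColor _ _ = i
      rw [pairColor, hres _ i (by simp [a]; omega), hres _ i (by simp; omega), if_pos rfl,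
        if_pos (by simp [a]; omega)]
  have hkey : ∀ j, matchingKey i (a j) = j.map Fin.val := by
    rintro (_ | q)
    · exact if_neg (by rw [hres _ (i + 1) (Nat.mod_eq_of_lt (i + 1).isLt)]; exact hnext)
    · rw [matchingKey, hres _ i (by simp [a]; omega), if_pos rfl]
      simp [a]
      omega
  have hinj : Injective (matchingKey i ∘ a) := by
    intro j j' h
    exact Option.map_injective Fin.val_injective (by simpa [hkey] using h)
  simpa using card_le_numEdgeComps (G := colorClass (residueColoring n) i) (matchingKey i)
    (fun u v h => matchingKey_eq_of_pairColor_eq h.2) a ha hinj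

end Construction

theorem Fin.three_eq_or_eq_or_eq {i j k : Fin 3} (hij : i ≠ j) (hik : i ≠ k) (hjk : j ≠ k)
    (l : Fin 3) : l = i ∨ l = j ∨ l = k := by
  revert i j k l; decide

theorem Fin.three_exists_ne_and_ne (i j : Fin 3) : ∃ k, k ≠ i ∧ k ≠ j := by
  revert i j; decide

section UpperBound

variable {n m : ℕ} {G : Fin 3 → SimpleGraph (Fin n)}

theorem reachable_of_cover (hcover : ∀ u v, u ≠ v → ∃ i, (G i).Reachable u v)
    {i j k : Fin 3} (hij : i ≠ j) (hik : i ≠ k) (hjk : j ≠ k) {u v : Fin n} (huv : u ≠ v) :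
    (G i).Reachable u v ∨ (G j).Reachable u v ∨ (G k).Reachable u v := by
  obtain ⟨l, hl⟩ := hcover u v huv
  rcases Fin.three_eq_or_eq_or_eq hij hik hjk l with rfl | rfl | rfl <;> simp [hl]

theorem false_of_uniform_outside_component (hn : n < 6 * m + 6)
    (hcover : ∀ u v, u ≠ v → ∃ i, (G i).Reachable u v)
    (hbig : ∀ i u v, u ≠ v → (G i).Reachable u v → m + 1 < numEdgeComps (G i))
    {i j k : Fin 3} (hij : i ≠ j) (hik : i ≠ k) (hjk : j ≠ k) {s t : Fin n} (hst : s ≠ t)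
    (hs : (G i).Reachable s t)
    (hall : ∀ u, ¬ (G i).Reachable u s → (G j).Reachable u t ∧ (G k).Reachable u s) :
    False := by
  obtain ⟨w, hw⟩ := exists_not_reachable_of_one_lt_numEdgeComps (G := G i)
    (by have := hbig i s t hst hs; omega) s
  obtain ⟨hwj, hwk⟩ := hall w hw
  have hwt : w ≠ t := by rintro rfl; exact hw hs.symm
  have hws : w ≠ s := by rintro rfl; exact hw .rfl
  have hdisj_ij : Disjoint {v | ¬ (G i).Reachable v s} {v | ¬ (G j).Reachable v t} :=
    Set.disjoint_left.2 fun v hvi hvj => hvj (hall v hvi).1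
  have hdisj_ik : Disjoint {v | ¬ (G i).Reachable v s} {v | ¬ (G k).Reachable v s} :=
    Set.disjoint_left.2 fun v hvi hvk => hvk (hall v hvi).2
  have hdisj_jk : Disjoint {v | ¬ (G j).Reachable v t} {v | ¬ (G k).Reachable v s} := by
    refine Set.disjoint_left.2 fun v (hvj : ¬ _) (hvk : ¬ _) => ?_
    have hvi : (G i).Reachable v s := by_contra fun hvi => hvj (hall v hvi).1
    have hvw : v ≠ w := by rintro rfl; exact hw hvi
    rcases reachable_of_cover hcover hij hik hjk hvw with h | h | h
    · exact hw (h.symm.trans hvi)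
    · exact hvj (h.trans hwj)
    · exact hvk (h.trans hwk)
  have := Set.ncard_add_ncard_add_ncard_le hdisj_ij hdisj_ik hdisj_jk
  have := two_mul_numEdgeComps_le (G i) s
  have := two_mul_numEdgeComps_le (G j) t
  have := two_mul_numEdgeComps_le (G k) s
  have := hbig i s t hst hs
  have := hbig j w t hwt hwj
  have := hbig k w s hws hwk
  rw [Nat.card_fin] at *
  omega

theorem false_of_exclusive_pair (hn : n < 6 * m + 6) (hm : 1 ≤ m)
    (hcover : ∀ u v, u ≠ v → ∃ i, (G i).Reachable u v)
    (hbig : ∀ i u v, u ≠ v → (G i).Reachable u v → m + 1 < numEdgeComps (G i))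
    {i j k : Fin 3} (hij : i ≠ j) (hik : i ≠ k) (hjk : j ≠ k) {s t : Fin n}
    (hi : (G i).Reachable s t) (hj : ¬ (G j).Reachable s t) (hk : ¬ (G k).Reachable s t) :
    False := by
  have hst : s ≠ t := by rintro rfl; exact hj .rfl
  have htype : ∀ u, ¬ (G i).Reachable u s →
      (G j).Reachable u s ∧ (G k).Reachable u t ∨ (G j).Reachable u t ∧ (G k).Reachable u s := by
    intro u hu
    have hus : u ≠ s := by rintro rfl; exact hu .rfl
    have hut : u ≠ t := by rintro rfl; exact hu hi.symm
    rcases reachable_of_cover hcover hij hik hjk hus with hs | hs | hs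
    · exact absurd hs hu
    all_goals rcases reachable_of_cover hcover hij hik hjk hut with ht | ht | ht
    all_goals first
      | exact absurd (ht.trans hi.symm) hu
      | exact Or.inl ⟨hs, ht⟩
      | exact Or.inr ⟨ht, hs⟩
      | exact absurd (hs.symm.trans ht) ‹_›
  have hcross : ∀ u v, (G j).Reachable u s ∧ (G k).Reachable u t →
      (G j).Reachable v t ∧ (G k).Reachable v s → (G i).Reachable u v := by
    rintro u v ⟨hus, hut⟩ ⟨hvt, hvs⟩
    have huv : u ≠ v := by rintro rfl; exact hj (hus.symm.trans hvt)
    rcases reachable_of_cover hcover hij hik hjk huv with h | h | h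
    · exact h
    · exact absurd (hus.symm.trans (h.trans hvt)) hj
    · exact absurd (hvs.symm.trans (h.symm.trans hut)) hk
  by_cases hY : ∀ u, ¬ (G i).Reachable u s → (G j).Reachable u t ∧ (G k).Reachable u s
  · exact false_of_uniform_outside_component hn hcover hbig hij hik hjk hst hi hY
  by_cases hX : ∀ u, ¬ (G i).Reachable u s → (G k).Reachable u t ∧ (G j).Reachable u s
  · exact false_of_uniform_outside_component hn hcover hbig hik hij hjk.symm hst hi hX
  push Not at hX hY
  obtain ⟨u₀, hu₀, hu₀X⟩ := hY
  obtain ⟨v₀, hv₀, hv₀Y⟩ := hX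
  replace hu₀X := (htype u₀ hu₀).resolve_right fun h => hu₀X h.1 h.2
  replace hv₀Y := (htype v₀ hv₀).resolve_left fun h => hv₀Y h.2 h.1
  have hle : numEdgeComps (G i) ≤ 2 := by
    refine (numEdgeComps_le_ncard_of_forall_reachable {s, u₀} fun z => ?_).trans
      ((Set.ncard_insert_le _ _).trans (by simp))
    by_cases hz : (G i).Reachable z s
    · exact ⟨s, .inl rfl, hz⟩
    refine ⟨u₀, .inr rfl, ?_⟩
    rcases htype z hz with hzX | hzY
    · exact (hcross z v₀ hzX hv₀Y).trans (hcross u₀ v₀ hu₀X hv₀Y).symm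
    · exact (hcross u₀ z hu₀X hzY).symm
  have := hbig i s t hst hi
  omega

theorem false_of_no_exclusive_pair (hn : 2 ≤ n)
    (hcover : ∀ u v, u ≠ v → ∃ i, (G i).Reachable u v)
    (hbig : ∀ i u v, u ≠ v → (G i).Reachable u v → 1 < numEdgeComps (G i))
    (hno : ∀ (i j k : Fin 3) (u v : Fin n), i ≠ j → i ≠ k → j ≠ k →
      (G i).Reachable u v → ¬ (G j).Reachable u v → (G k).Reachable u v) :
    False := by
  obtain ⟨s, t, hst⟩ : ∃ s t : Fin n, s ≠ t := ⟨⟨0, by omega⟩, ⟨1, by omega⟩, by simp⟩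
  obtain ⟨j, hj⟩ := hcover s t hst
  obtain ⟨w, hw⟩ := exists_not_reachable_of_one_lt_numEdgeComps (hbig j s t hst hj) s
  have hws : w ≠ s := by rintro rfl; exact hw .rfl
  obtain ⟨i, hi⟩ := hcover w s hws
  have hij : i ≠ j := by rintro rfl; exact hw hi
  obtain ⟨l, hli, hlj⟩ := Fin.three_exists_ne_and_ne i j
  have hl : (G l).Reachable w s := hno i j l w s hij hli.symm hlj.symm hi hw
  have hspan : ∀ v, (G i).Reachable v s := by
    intro v
    by_contra hv
    have hvw : v ≠ w := by rintro rfl; exact hv hi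
    have hvw_i : ¬ (G i).Reachable v w := fun h => hv (h.trans hi)
    have hboth : (G j).Reachable v w ∧ (G l).Reachable v w := by
      rcases reachable_of_cover hcover hij hli.symm hlj.symm hvw with h | h | h
      · exact absurd h hvw_i
      · exact ⟨h, hno j i l v w hij.symm hlj.symm hli.symm h hvw_i⟩
      · exact ⟨hno l i j v w hli hlj hij h hvw_i, h⟩
    have hvs : (G j).Reachable v s := hno l i j v s hli hlj hij (hboth.2.trans hl) hv
    exact hw (hboth.1.symm.trans hvs)
  obtain ⟨u, hu⟩ := exists_not_reachable_of_one_lt_numEdgeComps (hbig i w s hws hi) s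
  exact hu (hspan u)

theorem exists_numEdgeComps_le_of_forall_adj (hn : 6 ≤ n)
    (hcover : ∀ u v, u ≠ v → ∃ i, (G i).Adj u v) :
    ∃ i, 0 < numEdgeComps (G i) ∧ numEdgeComps (G i) ≤ n / 6 + 1 := by
  by_contra! h
  have hreach : ∀ u v, u ≠ v → ∃ i, (G i).Reachable u v := fun u v huv =>
    (hcover u v huv).imp fun _ => Adj.reachable
  have hbig : ∀ i u v, u ≠ v → (G i).Reachable u v → n / 6 + 1 < numEdgeComps (G i) :=
    fun i u v huv hr => h i (numEdgeComps_pos_of_reachable huv hr)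
  by_cases hex : ∃ (i j k : Fin 3) (s t : Fin n), i ≠ j ∧ i ≠ k ∧ j ≠ k ∧
      (G i).Reachable s t ∧ ¬ (G j).Reachable s t ∧ ¬ (G k).Reachable s t
  · obtain ⟨i, j, k, s, t, hij, hik, hjk, hi, hj, hk⟩ := hex
    exact false_of_exclusive_pair (by omega) (by omega) hreach hbig hij hik hjk hi hj hk
  · push Not at hex
    exact false_of_no_exclusive_pair (by omega) hreach
      (fun i u v huv hr => by have := hbig i u v huv hr; omega) hex

end UpperBound

theorem usedColor_iff_numEdgeComps_pos {n k : ℕ} {c : Sym2 (Fin n) → Fin k} {i : Fin k} :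
    usedColor c i ↔ 0 < numEdgeComps (colorClass c i) := by
  rw [numEdgeComps_pos_iff]
  rfl

theorem fGraph_eq {n k N : ℕ}
    (hle : ∀ c : Sym2 (Fin n) → Fin k, ∃ i, usedColor c i ∧ numEdgeComps (colorClass c i) ≤ N)
    (c₀ : Sym2 (Fin n) → Fin k) (hused : ∃ i, usedColor c₀ i)
    (hge : ∀ i, usedColor c₀ i → N ≤ numEdgeComps (colorClass c₀ i)) :
    fGraph n k = N := by
  have hmin_le : ∀ c : Sym2 (Fin n) → Fin k, minComps c ≤ N := by
    intro c
    obtain ⟨i, hi, hiN⟩ := hle c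
    exact (Nat.sInf_le ⟨i, hi, rfl⟩ : minComps c ≤ _).trans hiN
  have hle_min : N ≤ minComps c₀ := by
    obtain ⟨i, hi⟩ := hused
    unfold minComps
    refine le_csInf ⟨_, i, hi, rfl⟩ ?_
    rintro _ ⟨j, hj, rfl⟩
    exact hge j hj
  refine IsGreatest.csSup_eq ⟨⟨c₀, (hmin_le c₀).antisymm hle_min⟩, ?_⟩
  rintro _ ⟨c, rfl⟩
  exact hmin_le c

/-- For every `n ≥ 6`, `f_3(K_n) = ⌊n/6⌋ + 1`: there is a 3-edge-coloring of
`K_n` in which every used color class has at least `⌊n/6⌋ + 1` components, and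
in every 3-edge-coloring some used color class has at most `⌊n/6⌋ + 1`
components. -/
theorem f_three_Kn (n : ℕ) (hn : 6 ≤ n) :
    fGraph n 3 = n / 6 + 1 ∧
    (∃ c : Sym2 (Fin n) → Fin 3, ∀ i : Fin 3,
      usedColor c i → n / 6 + 1 ≤ numEdgeComps (colorClass c i)) ∧
    (∀ c : Sym2 (Fin n) → Fin 3, ∃ i : Fin 3,
      usedColor c i ∧ numEdgeComps (colorClass c i) ≤ n / 6 + 1) := by
  have upper : ∀ c : Sym2 (Fin n) → Fin 3,
      ∃ i, usedColor c i ∧ numEdgeComps (colorClass c i) ≤ n / 6 + 1 := fun c => by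
    simpa only [usedColor_iff_numEdgeComps_pos] using
      exists_numEdgeComps_le_of_forall_adj (G := colorClass c) hn
        fun u v huv => ⟨c s(u, v), huv, rfl⟩
  have lower : ∀ i, n / 6 + 1 ≤ numEdgeComps (colorClass (residueColoring n) i) :=
    le_numEdgeComps_residueColoring (by omega)
  have used : usedColor (residueColoring n) 0 :=
    usedColor_iff_numEdgeComps_pos.2 ((Nat.succ_pos _).trans_le (lower 0))
  exact ⟨fGraph_eq upper _ ⟨0, used⟩ (fun i _ => lower i), ⟨_, fun i _ => lower i⟩, upper⟩
end

section
/- In every k-edge-coloring of K_n^r, if some color class has t components of sizes s_1,...,s_t (each s_i ≥ r, with the color class containing at least C(n,r)/k edges), then C(n − r(t−1), r) + (t−1) ≥ C(n,r)/k. Consequently, for fixed k ≥ r+1, f_k(K_n^r) ≤ n(1/r − 1/(r·k^{1/r}))(1 + o(1)) as n → ∞. -/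
open Filter Finset Topology
open scoped Nat

theorem Nat.choose_add_choose_le {r a b : ℕ} (ha : r ≤ a) (hb : r ≤ b) :
    a.choose r + b.choose r ≤ (a + b - r).choose r + 1 := by
  obtain ⟨m, rfl⟩ := Nat.exists_eq_add_of_le hb
  rw [show a + (r + m) - r = a + m by omega]
  cases r with
  | zero => simp
  | succ p =>
    induction m with
    | zero => simp
    | succ m ih =>
      have := Nat.choose_le_choose p (show p + 1 + m ≤ a + m by omega)
      simp only [← add_assoc, Nat.choose_succ_succ'] at ih ⊢
      omega

theorem Finset.sum_choose_le_choose_sub_add {ι : Type*} {r : ℕ} (T : Finset ι) (s : ι → ℕ)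
    (hs : ∀ j ∈ T, r ≤ s j) :
    ∑ j ∈ T, (s j).choose r ≤ (∑ j ∈ T, s j - r * (#T - 1)).choose r + (#T - 1) := by
  induction T using Finset.cons_induction with
  | empty => simp
  | cons a T haT ih =>
    rcases T.eq_empty_or_nonempty with rfl | hT
    · simp
    obtain ⟨q, hq⟩ : ∃ q, #T = q + 1 := ⟨#T - 1, by have := hT.card_pos; omega⟩
    have hsT : ∀ j ∈ T, r ≤ s j := fun j hj => hs j (mem_cons_of_mem hj)
    have hsum : r * q + r ≤ ∑ j ∈ T, s j := by
      have := card_nsmul_le_sum T s r hsT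
      rw [hq, smul_eq_mul] at this
      linarith
    have hpair := Nat.choose_add_choose_le (hs a (mem_cons_self a T))
      (show r ≤ ∑ j ∈ T, s j - r * q by omega)
    have hT' := ih hsT
    rw [hq, Nat.add_sub_cancel] at hT'
    rw [sum_cons, sum_cons, card_cons, hq, Nat.add_sub_cancel, mul_add_one]
    rw [show s a + (∑ j ∈ T, s j - r * q) - r = s a + ∑ j ∈ T, s j - (r * q + r) by omega] at hpair
    omega

theorem card_le_choose_sub_add_of_fibers {V κ : Type*} [Fintype V] {r : ℕ} (p : V → κ)
    (E : Finset (Finset V)) (T : Finset κ)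
    (hE : ∀ e ∈ E, #e = r ∧ ∃ j ∈ T, ∀ v ∈ e, p v = j)
    (hT : ∀ j ∈ T, ∃ e ∈ E, ∀ v ∈ e, p v = j) :
    #E ≤ (Fintype.card V - r * (#T - 1)).choose r + (#T - 1) := by
  classical
  let fiber (j : κ) : Finset V := {v | p v = j}
  have hE_sub : E ⊆ T.biUnion fun j => (fiber j).powersetCard r := by
    intro e he
    obtain ⟨hcard, j, hj, hej⟩ := hE e he
    exact mem_biUnion.2 ⟨j, hj, mem_powersetCard.2 ⟨fun v hv => by simp [fiber, hej v hv], hcard⟩⟩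
  have hfiber : ∀ j ∈ T, r ≤ #(fiber j) := by
    intro j hj
    obtain ⟨e, he, hej⟩ := hT j hj
    rw [← (hE e he).1]
    exact card_le_card fun v hv => by simp [fiber, hej v hv]
  have hsum : ∑ j ∈ T, #(fiber j) ≤ Fintype.card V :=
    (sum_card_fiberwise_eq_card_filter univ T p).trans_le (card_filter_le _ _)
  calc #E ≤ #(T.biUnion fun j => (fiber j).powersetCard r) := card_le_card hE_sub
    _ ≤ ∑ j ∈ T, #((fiber j).powersetCard r) := card_biUnion_le
    _ = ∑ j ∈ T, (#(fiber j)).choose r := by simp only [card_powersetCard]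
    _ ≤ (∑ j ∈ T, #(fiber j) - r * (#T - 1)).choose r + (#T - 1) :=
      sum_choose_le_choose_sub_add T _ hfiber
    _ ≤ (Fintype.card V - r * (#T - 1)).choose r + (#T - 1) := by gcongr

section ColorClass

variable {r n k : ℕ} (c : Finset (Fin n) → Fin k) (i : Fin k)

theorem hColorClass_connectedComponentMk_eq {e : Finset (Fin n)} (he : e.card = r)
    (hc : c e = i) {u v : Fin n} (hu : u ∈ e) (hv : v ∈ e) :
    (hColorClass r c i).connectedComponentMk u = (hColorClass r c i).connectedComponentMk v := by
  rcases eq_or_ne u v with rfl | huv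
  · rfl
  · exact SimpleGraph.ConnectedComponent.sound
      (SimpleGraph.Adj.reachable ⟨huv, e, he, hc, hu, hv⟩)

theorem numEdgeComps_le (G : SimpleGraph (Fin n)) : numEdgeComps G ≤ n :=
  calc numEdgeComps G ≤ Nat.card G.ConnectedComponent := Finite.card_subtype_le _
    _ ≤ Nat.card (Fin n) :=
      Nat.card_le_card_of_surjective G.connectedComponentMk fun C => C.exists_rep
    _ = n := Nat.card_eq_fintype_card.trans (Fintype.card_fin n)

theorem ncard_colorClass_le (hr : 2 ≤ r) :
    {e : Finset (Fin n) | e.card = r ∧ c e = i}.ncard ≤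
      (n - r * (numEdgeComps (hColorClass r c i) - 1)).choose r +
        (numEdgeComps (hColorClass r c i) - 1) := by
  classical
  set G := hColorClass r c i
  let T : Finset G.ConnectedComponent :=
    {C | ∃ u v, G.Adj u v ∧ G.connectedComponentMk u = C}
  have hT : numEdgeComps G = #T := by
    rw [numEdgeComps, Nat.card_eq_fintype_card, Fintype.card_subtype]
  have hmemT : ∀ C, C ∈ T ↔ ∃ u v, G.Adj u v ∧ G.connectedComponentMk u = C := by simp [T]
  have hmemE : ∀ e, e ∈ {e : Finset (Fin n) | e.card = r ∧ c e = i}.toFinset ↔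
      e.card = r ∧ c e = i := by simp
  rw [Set.ncard_eq_toFinset_card', hT]
  simpa only [Fintype.card_fin] using card_le_choose_sub_add_of_fibers G.connectedComponentMk
    {e : Finset (Fin n) | e.card = r ∧ c e = i}.toFinset T
    (fun e he => by
      obtain ⟨hcard, hc⟩ := (hmemE e).1 he
      obtain ⟨u, hu, v, hv, huv⟩ := one_lt_card.1 (show 1 < e.card by omega)
      exact ⟨hcard, G.connectedComponentMk u, (hmemT _).2 ⟨u, v, ⟨huv, e, hcard, hc, hu, hv⟩, rfl⟩,
        fun w hw => hColorClass_connectedComponentMk_eq c i hcard hc hw hu⟩)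
    (fun C hC => by
      obtain ⟨u, v, ⟨-, e, hcard, hc, hu, -⟩, rfl⟩ := (hmemT C).1 hC
      exact ⟨e, (hmemE e).2 ⟨hcard, hc⟩,
        fun w hw => hColorClass_connectedComponentMk_eq c i hcard hc hw hu⟩)

end ColorClass

theorem eventually_mul_lt_choose {r k : ℕ} {δ : ℝ} (hr : 2 ≤ r) (hkδ : k * δ ^ r < 1) :
    ∀ᶠ n : ℕ in atTop, (k : ℝ) * ((δ * n + r) ^ r / r ! + n) < n.choose r := by
  obtain ⟨q, rfl⟩ : ∃ q, r = q + 2 := ⟨r - 2, by omega⟩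
  have hchoose : Tendsto (fun n : ℕ => (n.choose (q + 2) : ℝ) / ((n : ℝ) ^ (q + 2) / (q + 2)!))
      atTop (𝓝 1) :=
    (Asymptotics.isEquivalent_iff_tendsto_one (by
      filter_upwards [eventually_ne_atTop 0] with n hn using by positivity)).1
      (isEquivalent_choose (q + 2))
  have hlin : Tendsto (fun n : ℕ => δ + (q + 2 : ℕ) / (n : ℝ)) atTop (𝓝 δ) := by
    simpa using tendsto_const_nhds.add (tendsto_const_div_atTop_nhds_zero_nat ((q + 2 : ℕ) : ℝ))
  have hinv : Tendsto (fun n : ℕ => ((n : ℝ) ^ (q + 1))⁻¹) atTop (𝓝 0) :=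
    tendsto_inv_atTop_zero.comp
      ((tendsto_pow_atTop (Nat.succ_ne_zero q)).comp tendsto_natCast_atTop_atTop)
  have hratio : Tendsto (fun n : ℕ => (k : ℝ) * ((δ * n + (q + 2 : ℕ)) ^ (q + 2) / (q + 2)! + n) /
      ((n : ℝ) ^ (q + 2) / (q + 2)!)) atTop (𝓝 (k * δ ^ (q + 2))) := by
    have := ((hlin.pow (q + 2)).add (hinv.const_mul ((q + 2)! : ℝ))).const_mul (k : ℝ)
    rw [mul_zero, add_zero] at this
    refine this.congr' ?_
    filter_upwards [eventually_ne_atTop 0] with n hn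
    have hn' : (n : ℝ) ≠ 0 := Nat.cast_ne_zero.2 hn
    rw [show δ + (q + 2 : ℕ) / (n : ℝ) = (δ * n + (q + 2 : ℕ)) / n by field_simp, div_pow,
      show ((n : ℝ) ^ (q + 1))⁻¹ = n / n ^ (q + 2) by rw [pow_succ _ (q + 1)]; field_simp]
    field_simp
  filter_upwards [hratio.eventually_lt hchoose hkδ, eventually_gt_atTop 0] with n h hn
  exact (div_lt_div_iff_of_pos_right (by positivity)).1 h

theorem eventually_lt_sub_of_choose_div_le {r k : ℕ} {δ : ℝ} (hr : 2 ≤ r) (hk : 0 < k)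
    (hkδ : k * δ ^ r < 1) :
    ∀ᶠ n : ℕ in atTop, ∀ s ≤ n, (n.choose r : ℝ) / k ≤ (n - r * s).choose r + s →
      δ * n + r < ((n - r * s : ℕ) : ℝ) := by
  filter_upwards [eventually_mul_lt_choose hr hkδ] with n hn s hs h
  by_contra! hm
  have hchoose : ((n - r * s).choose r : ℝ) ≤ (δ * n + r) ^ r / r ! :=
    (Nat.choose_le_pow_div r _).trans (by gcongr)
  have hs' : (s : ℝ) ≤ n := Nat.cast_le.2 hs
  rw [div_le_iff₀' (by positivity)] at h
  nlinarith

theorem eventually_le_of_choose_div_le {r k : ℕ} {ε : ℝ} (hr : 2 ≤ r) (hk : 1 < k) (hε : 0 < ε) :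
    ∀ᶠ n : ℕ in atTop, ∀ t ≤ n,
      (n.choose r : ℝ) / k ≤ (n - r * (t - 1)).choose r + ((t - 1 : ℕ) : ℝ) →
      (t : ℝ) ≤ n * (1 / (r : ℝ) - 1 / ((r : ℝ) * (k : ℝ) ^ ((1 : ℝ) / (r : ℝ)))) * (1 + ε) := by
  set θ := ((k : ℝ) ^ ((1 : ℝ) / r))⁻¹ with hθ
  have hk' : (1 : ℝ) < k := Nat.one_lt_cast.2 hk
  have hθ_pos : 0 < θ := by positivity
  have hθ_lt : θ < 1 := inv_lt_one_of_one_lt₀ (Real.one_lt_rpow hk' (by positivity))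
  have hθ_pow : (k : ℝ) * θ ^ r = 1 := by
    rw [hθ, inv_pow, one_div, Real.rpow_inv_natCast_pow (by positivity) (by omega),
      mul_inv_cancel₀ (by positivity)]
  have hcoef : 1 / (r : ℝ) - 1 / ((r : ℝ) * (k : ℝ) ^ ((1 : ℝ) / r)) = (1 - θ) / r := by
    rw [hθ]; ring
  -- what is needed of `δ`: `0 ≤ δ < θ` and `1 - δ ≤ (1 - θ) * (1 + ε)`
  set δ := max (θ - ε * (1 - θ)) 0
  have hδ_lt : δ < θ := max_lt (by nlinarith) hθ_pos
  have hkδ : k * δ ^ r < 1 := by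
    rw [← hθ_pow]
    gcongr
  filter_upwards [eventually_lt_sub_of_choose_div_le hr (by omega) hkδ] with n hn t ht h
  have hm := hn (t - 1) (by omega) h
  have hrt : r * (t - 1) ≤ n := by
    by_contra! hlt
    rw [Nat.sub_eq_zero_of_le hlt.le, Nat.cast_zero] at hm
    nlinarith [le_max_right (θ - ε * (1 - θ)) 0]
  have ht1 : (t : ℝ) ≤ ((t - 1 : ℕ) : ℝ) + 1 := by exact_mod_cast (by omega : t ≤ t - 1 + 1)
  rw [Nat.cast_sub hrt, Nat.cast_mul] at hm
  rw [hcoef, mul_div_assoc', div_mul_eq_mul_div, le_div_iff₀ (by positivity)]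
  nlinarith [le_max_left (θ - ε * (1 - θ)) 0]

section Coloring

variable {n r k : ℕ}

theorem exists_choose_div_le_ncard (hk : 0 < k) (c : Finset (Fin n) → Fin k) :
    ∃ i, (n.choose r : ℝ) / k ≤ {e : Finset (Fin n) | e.card = r ∧ c e = i}.ncard := by
  classical
  obtain ⟨i, -, hi⟩ := exists_le_card_fiber_of_nsmul_le_card_of_maps_to
    (s := (univ : Finset (Fin n)).powersetCard r) (t := univ) (f := c)
    (b := (n.choose r : ℝ) / k) (fun _ _ => mem_univ _) ⟨⟨0, hk⟩, mem_univ _⟩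
    (by simp [nsmul_eq_mul, mul_div_cancel₀ _ (Nat.cast_ne_zero.2 hk.ne' : (k : ℝ) ≠ 0)])
  refine ⟨i, hi.trans_eq ?_⟩
  rw [Set.ncard_eq_toFinset_card']
  congr 2
  ext e
  simp

theorem hMinComps_le_numEdgeComps {c : Finset (Fin n) → Fin k} {i : Fin k} (h : hUsed r c i) :
    hMinComps r c ≤ numEdgeComps (hColorClass r c i) :=
  Nat.sInf_le ⟨i, h, rfl⟩

theorem fHyper_le_of_forall (hk : 0 < k) (hrn : r ≤ n) {B : ℝ}
    (h : ∀ (c : Finset (Fin n) → Fin k) i,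
      (n.choose r : ℝ) / k ≤ {e : Finset (Fin n) | e.card = r ∧ c e = i}.ncard →
        (numEdgeComps (hColorClass r c i) : ℝ) ≤ B) :
    (fHyper n r k : ℝ) ≤ B := by
  have hc : ∀ c : Finset (Fin n) → Fin k, (hMinComps r c : ℝ) ≤ B := by
    intro c
    obtain ⟨i, hi⟩ := exists_choose_div_le_ncard hk c
    have hpos : (0 : ℝ) < {e : Finset (Fin n) | e.card = r ∧ c e = i}.ncard :=
      lt_of_lt_of_le (by have := Nat.choose_pos hrn; positivity) hi
    obtain ⟨e, he⟩ := Set.nonempty_of_ncard_ne_zero (Nat.cast_pos.1 hpos).ne'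
    exact (Nat.cast_le.2 (hMinComps_le_numEdgeComps ⟨e, he⟩)).trans (h c i hi)
  have hB : 0 ≤ B := (Nat.cast_nonneg _).trans (hc fun _ => ⟨0, hk⟩)
  have hfloor : fHyper n r k ≤ ⌊B⌋₊ :=
    csSup_le' (by rintro _ ⟨c, rfl⟩; exact Nat.le_floor (hc c))
  exact (Nat.cast_le.2 hfloor).trans (Nat.floor_le hB)

end Coloring

/-- The convexity bound on the number of components of a large color class,
and the resulting asymptotic upper bound
`f_k(K_n^r) ≤ n (1/r − 1/(r k^{1/r})) (1 + o(1))` for fixed `k ≥ r + 1`. -/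
theorem f_upper_bound (r k : ℕ) (hr : 2 ≤ r) (hk : r + 1 ≤ k) :
    (∀ n : ℕ, ∀ c : Finset (Fin n) → Fin k, ∀ i : Fin k,
      (n.choose r : ℝ) / (k : ℝ) ≤
        (Set.ncard {e : Finset (Fin n) | e.card = r ∧ c e = i} : ℝ) →
      (n.choose r : ℝ) / (k : ℝ) ≤
        (((n - r * (numEdgeComps (hColorClass r c i) - 1)).choose r : ℝ) +
          ((numEdgeComps (hColorClass r c i) - 1 : ℕ) : ℝ))) ∧
    (∀ ε : ℝ, 0 < ε → ∃ N : ℕ, ∀ n : ℕ, N ≤ n →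
      (fHyper n r k : ℝ) ≤
        (n : ℝ) * (1 / (r : ℝ) - 1 / ((r : ℝ) * (k : ℝ) ^ ((1 : ℝ) / (r : ℝ)))) *
          (1 + ε)) := by
  have hcount : ∀ n : ℕ, ∀ c : Finset (Fin n) → Fin k, ∀ i : Fin k,
      (n.choose r : ℝ) / k ≤ {e : Finset (Fin n) | e.card = r ∧ c e = i}.ncard →
      (n.choose r : ℝ) / k ≤ (n - r * (numEdgeComps (hColorClass r c i) - 1)).choose r +
        ((numEdgeComps (hColorClass r c i) - 1 : ℕ) : ℝ) :=
    fun n c i h => h.trans (by exact_mod_cast ncard_colorClass_le c i hr)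
  refine ⟨hcount, fun ε hε => ?_⟩
  obtain ⟨N, hN⟩ := eventually_atTop.1
    ((eventually_le_of_choose_div_le hr (by omega : 1 < k) hε).and (eventually_ge_atTop r))
  exact ⟨N, fun n hn => fHyper_le_of_forall (by omega) (hN n hn).2 fun c i hi =>
    (hN n hn).1 _ (numEdgeComps_le _) (hcount n c i hi)⟩
end
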